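/- arXiv:math/0407070 — 8 statements merged into one kernel-verified Lean document; each statement's English description precedes it below -/
import Mathlib

section
/- In a semicentral bigroupoid (S,•,∘), the operation • is anti-commutative: for all a,b in S, if a•b = b•a then a = b. -/
theorem scbg_anticomm {S : Type*} (bu ci : S → S → S)
    (h1 : ∀ a b c : S, ci (bu a b) (bu b c) = b)
    (h2 : ∀ a b c : S, bu (ci a b) (ci b c) = b) :
    ∀ a b : S, bu a b = bu b a → a = b := by
  intro a b h
  have ha := h1 b a b
  have hb := h1 a b a
  rw [h] at ha
  rw [h] at hb
  exact ha.symm.trans hb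
end

section
/- If (S,•,∘) is a semicentral bigroupoid and φ : S → S is a bijection, then (S,*,+) defined by a*b = φ⁻¹(a•b) and a+b = φ(a)∘φ(b) is also a semicentral bigroupoid. -/
theorem scbg_lifting {S : Type*} (bu ci : S → S → S)
    (h1 : ∀ a b c : S, ci (bu a b) (bu b c) = b)
    (h2 : ∀ a b c : S, bu (ci a b) (ci b c) = b)
    (φ : Equiv.Perm S) :
    (∀ a b c : S,
      (fun x y => ci (φ x) (φ y)) ((fun x y => φ.symm (bu x y)) a b)
        ((fun x y => φ.symm (bu x y)) b c) = b) ∧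
    (∀ a b c : S,
      (fun x y => φ.symm (bu x y)) ((fun x y => ci (φ x) (φ y)) a b)
        ((fun x y => ci (φ x) (φ y)) b c) = b) := by
  constructor
  · intro a b c
    simp [h1 a b c]
  · intro a b c
    simp [h2 (φ a) (φ b) (φ c)]
end

section
/- In a semicentral bigroupoid (S,•,∘), the square map φ : x ↦ x•x is injective (and hence a bijection when S is finite). -/
theorem scbg_square_map_injective {S : Type*} (bu ci : S → S → S)
    (h1 : ∀ a b c : S, ci (bu a b) (bu b c) = b)
    (h2 : ∀ a b c : S, bu (ci a b) (ci b c) = b) :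
    Function.Injective (fun x : S => bu x x) := by
  intro x y h
  simp only at h
  calc x = ci (bu x x) (bu x x) := (h1 x x x).symm
    _ = ci (bu y y) (bu y y) := by rw [h]
    _ = y := h1 y y y
end

section
/- In a semicentral bigroupoid (S,•,∘), if a∘b = x and c∘d = x, then a∘d = x and c∘b = x. The analogous statement holds for •. -/
theorem scbg_swap {S : Type*} (bu ci : S → S → S)
    (h1 : ∀ a b c : S, ci (bu a b) (bu b c) = b)
    (h2 : ∀ a b c : S, bu (ci a b) (ci b c) = b) :
    (∀ a b c d x : S, ci a b = x → ci c d = x → ci a d = x ∧ ci c b = x) ∧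
    (∀ a b c d x : S, bu a b = x → bu c d = x → bu a d = x ∧ bu c b = x) := by
  constructor
  · intro a b c d x hab hcd
    constructor
    · have ha : bu (ci a a) (ci a b) = a := h2 a a b
      have hd : bu (ci c d) (ci d d) = d := h2 c d d
      rw [hab] at ha; rw [hcd] at hd
      rw [← ha, ← hd, h1]
    · have hc : bu (ci c c) (ci c d) = c := h2 c c d
      have hb : bu (ci a b) (ci b b) = b := h2 a b b
      rw [hcd] at hc; rw [hab] at hb
      rw [← hc, ← hb, h1]
  · intro a b c d x hab hcd
    constructor
    · have ha : ci (bu a a) (bu a b) = a := h1 a a b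
      have hd : ci (bu c d) (bu d d) = d := h1 c d d
      rw [hab] at ha; rw [hcd] at hd
      rw [← ha, ← hd, h2]
    · have hc : ci (bu c c) (bu c d) = c := h1 c c d
      have hb : ci (bu a b) (bu b b) = b := h1 a b b
      rw [hcd] at hc; rw [hab] at hb
      rw [← hc, ← hb, h2]
end

section
/- In a semicentral bigroupoid (S,•,∘), for every x ∈ S the set ρ(x) = {(a,b) ∈ S² : a∘b = x} equals the product (S•x) × (x•S). -/
theorem scbg_rho_eq_prod {S : Type*} (bu ci : S → S → S)
    (h1 : ∀ a b c : S, ci (bu a b) (bu b c) = b)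
    (h2 : ∀ a b c : S, bu (ci a b) (ci b c) = b) :
    ∀ x : S, {p : S × S | ci p.1 p.2 = x} =
      {y : S | ∃ s, bu s x = y} ×ˢ {y : S | ∃ s, bu x s = y} := by
  intro x
  ext ⟨a, b⟩
  simp only [Set.mem_setOf_eq, Set.mem_prod]
  constructor
  · rintro h
    refine ⟨⟨ci a a, ?_⟩, ⟨ci b b, ?_⟩⟩
    · have := h2 a a b; rw [h] at this; exact this
    · have := h2 a b b; rw [h] at this; exact this
  · rintro ⟨⟨s, rfl⟩, ⟨t, rfl⟩⟩
    exact h1 s x t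
end

section
/- In a semicentral bigroupoid (S,•,∘), for every x ∈ S the intersection (S•x) ∩ (x•S) is a singleton. -/
theorem scbg_intersection_singleton {S : Type*} (bu ci : S → S → S)
    (h1 : ∀ a b c : S, ci (bu a b) (bu b c) = b)
    (h2 : ∀ a b c : S, bu (ci a b) (ci b c) = b) :
    ∀ x : S, ∃! y : S, y ∈ {z : S | ∃ s, bu s x = z} ∩ {z : S | ∃ s, bu x s = z} := by
  intro x
  refine ⟨bu x x, ⟨⟨x, rfl⟩, ⟨x, rfl⟩⟩, ?_⟩
  rintro y ⟨⟨s, hs⟩, ⟨t, ht⟩⟩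
  have hx : ci y y = x := by
    have : ci (bu s x) (bu x t) = x := h1 s x t
    rwa [hs, ht] at this
  have := h2 y y y
  rw [hx] at this
  exact this.symm
end

section
/- Let 𝓡 be a rectangular structure on a finite base set S. Then for every rectangle R = (R₁,R₂) ∈ 𝓡, |R₁|·|R₂| = |S|, and for any two rectangles R, Q ∈ 𝓡, |R₁| = |Q₁| and |R₂| = |Q₂|. -/
private lemma rect_key {S : Type*} [Fintype S]
    (R : Set (Set S × Set S))
    (hcover : ∀ s t : S, ∃! r, r ∈ R ∧ s ∈ r.1 ∧ t ∈ r.2)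
    (hmeet : ∀ r ∈ R, ∀ q ∈ R, ∃! x : S, x ∈ r.1 ∧ x ∈ q.2) :
    ∀ r ∈ R, ∀ q ∈ R, r.1.ncard * q.2.ncard = Fintype.card S := by
  classical
  intro r hr q hq
  have hNS : Nonempty S := ⟨(hmeet r hr r hr).choose⟩
  -- D s t : the unique rectangle through (s, t)
  let D : S → S → Set S × Set S := fun s t => (hcover s t).choose
  have hDmem : ∀ s t, D s t ∈ R ∧ s ∈ (D s t).1 ∧ t ∈ (D s t).2 :=
    fun s t => (hcover s t).choose_spec.1
  have hDuniq : ∀ s t p, p ∈ R → s ∈ p.1 → t ∈ p.2 → p = D s t :=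
    fun s t p hp h1 h2 => (hcover s t).choose_spec.2 p ⟨hp, h1, h2⟩
  -- M p p' : the unique point of p.1 ∩ p'.2
  let M : Set S × Set S → Set S × Set S → S := fun p p' =>
    if h : p ∈ R ∧ p' ∈ R then (hmeet p h.1 p' h.2).choose else Classical.arbitrary S
  have hMmem : ∀ p p', (h : p ∈ R) → (h' : p' ∈ R) → M p p' ∈ p.1 ∧ M p p' ∈ p'.2 := by
    intro p p' h h'
    simp only [M, dif_pos (And.intro h h')]
    exact (hmeet p h p' h').choose_spec.1
  have hMuniq : ∀ p p', (h : p ∈ R) → (h' : p' ∈ R) → ∀ x, x ∈ p.1 → x ∈ p'.2 → x = M p p' := by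
    intro p p' h h' x hx hx'
    simp only [M, dif_pos (And.intro h h')]
    exact (hmeet p h p' h').choose_spec.2 x ⟨hx, hx'⟩
  -- the bijection  r.1 × q.2 ≃ S
  let g : ↥r.1 × ↥q.2 → S := fun ab => M (D ab.2.1 ab.1.1) (D ab.2.1 ab.1.1)
  let f : S → ↥r.1 × ↥q.2 := fun s =>
    ⟨⟨M r (D s s), (hMmem r (D s s) hr (hDmem s s).1).1⟩,
     ⟨M (D s s) q, (hMmem (D s s) q (hDmem s s).1 hq).2⟩⟩
  have hgf : ∀ s, g (f s) = s := by
    intro s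
    set p := D s s with hp
    have hpR : p ∈ R := (hDmem s s).1
    have ha : M r p ∈ r.1 ∧ M r p ∈ p.2 := hMmem r p hr hpR
    have hb : M p q ∈ p.1 ∧ M p q ∈ q.2 := hMmem p q hpR hq
    have hDab : p = D (M p q) (M r p) := hDuniq _ _ p hpR hb.1 ha.2
    show M (D (M p q) (M r p)) (D (M p q) (M r p)) = s
    rw [← hDab]
    exact (hMuniq p p hpR hpR s (hDmem s s).2.1 (hDmem s s).2.2).symm
  have hfg : ∀ ab, f (g ab) = ab := by
    rintro ⟨⟨a, ha⟩, ⟨b, hb⟩⟩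
    set p := D b a with hp
    have hpR : p ∈ R := (hDmem b a).1
    have hbp : b ∈ p.1 := (hDmem b a).2.1
    have hap : a ∈ p.2 := (hDmem b a).2.2
    set s := M p p with hs
    have hsmem : s ∈ p.1 ∧ s ∈ p.2 := hMmem p p hpR hpR
    have hDss : p = D s s := hDuniq s s p hpR hsmem.1 hsmem.2
    have h1 : M r (D s s) = a := by
      rw [← hDss]; exact (hMuniq r p hr hpR a ha hap).symm
    have h2 : M (D s s) q = b := by
      rw [← hDss]; exact (hMuniq p q hpR hq b hbp hb).symm
    show (⟨⟨M r (D s s), _⟩, ⟨M (D s s) q, _⟩⟩ : ↥r.1 × ↥q.2) = ⟨⟨a, ha⟩, ⟨b, hb⟩⟩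
    simp [h1, h2]
  let e : ↥r.1 × ↥q.2 ≃ S := ⟨g, f, hfg, hgf⟩
  have hcard := Nat.card_congr e
  rwa [Nat.card_prod, Nat.card_coe_set_eq, Nat.card_coe_set_eq,
    Nat.card_eq_fintype_card] at hcard

theorem rect_struct_format {S : Type*} [Fintype S]
    (R : Set (Set S × Set S))
    (hcover : ∀ s t : S, ∃! r, r ∈ R ∧ s ∈ r.1 ∧ t ∈ r.2)
    (hmeet : ∀ r ∈ R, ∀ q ∈ R, ∃! x : S, x ∈ r.1 ∧ x ∈ q.2) :
    (∀ r ∈ R, r.1.ncard * r.2.ncard = Fintype.card S) ∧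
    (∀ r ∈ R, ∀ q ∈ R, r.1.ncard = q.1.ncard ∧ r.2.ncard = q.2.ncard) := by
  have key := rect_key R hcover hmeet
  refine ⟨fun r hr => key r hr r hr, fun r hr q hq => ?_⟩
  have pos1 : ∀ p ∈ R, 0 < p.1.ncard := by
    intro p hp
    obtain ⟨x, hx, -⟩ := (hmeet p hp p hp).exists
    exact Set.ncard_pos (p.1.toFinite) |>.mpr ⟨x, hx⟩
  have pos2 : ∀ p ∈ R, 0 < p.2.ncard := by
    intro p hp
    obtain ⟨x, -, hx⟩ := (hmeet p hp p hp).exists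
    exact Set.ncard_pos (p.2.toFinite) |>.mpr ⟨x, hx⟩
  constructor
  · have h1 := key r hr q hq
    have h2 := key q hq q hq
    exact Nat.eq_of_mul_eq_mul_right (pos2 q hq) (h1.trans h2.symm)
  · have h1 := key r hr r hr
    have h2 := key r hr q hq
    exact Nat.eq_of_mul_eq_mul_left (pos1 r hr) (h1.trans h2.symm)
end

section
/- Every finite central groupoid has square order: if (S,•) is a finite central groupoid then |S| = n² for some natural number n. -/
/-!
Draw an edge `a → b` whenever `b = a • x` for some `x`. The central law says that `a • c` is the
unique `b` with `a → b → c`. Hence `b ↦ b • c` is a bijection from the out-neighbours of `a` onto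
the in-neighbours of `c`, so all out-degrees equal a common `d`; and for fixed `a` the fibres of
`c ↦ a • c` are the out-neighbourhoods of the `d` out-neighbours of `a`, so `|S| = d²`.
-/

open Finset

namespace CentralGroupoid

variable {S : Type*} {op : S → S → S}

def IsCentral (op : S → S → S) : Prop :=
  ∀ a b c, op (op a b) (op b c) = b

theorem IsCentral.mem_range_op_op (h : IsCentral op) (a c : S) : c ∈ Set.range (op (op a c)) :=
  ⟨op c c, h a c c⟩

theorem IsCentral.op_eq_of_mem_range {a b c : S} (h : IsCentral op) (hab : b ∈ Set.range (op a))
    (hbc : c ∈ Set.range (op b)) : op a c = b := by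
  obtain ⟨x, rfl⟩ := hab
  obtain ⟨y, rfl⟩ := hbc
  calc op a (op (op a x) y) = op (op (op a a) (op a x)) (op (op a x) y) := by rw [h a a x]
    _ = op a x := h _ _ _

variable [Fintype S] [DecidableEq S]

theorem IsCentral.card_image_eq_card_filter (h : IsCentral op) (a c : S) :
    #(univ.image (op a)) = #{b | c ∈ univ.image (op b)} := by
  simp only [mem_image_univ_iff_mem_range]
  refine card_nbij' (op · c) (op a) ?_ ?_ ?_ ?_
  · intro b _
    simpa using h.mem_range_op_op b c
  · intro x _
    simp
  · intro b hb
    exact h.op_eq_of_mem_range (by simpa using hb) ⟨c, rfl⟩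
  · intro x hx
    exact h.op_eq_of_mem_range (h.mem_range_op_op a x) (by simpa using hx)

theorem IsCentral.card_image_eq (h : IsCentral op) (a a' : S) :
    #(univ.image (op a)) = #(univ.image (op a')) := by
  rw [h.card_image_eq_card_filter a a, h.card_image_eq_card_filter a' a]

theorem IsCentral.filter_op_eq {a b : S} (h : IsCentral op) (hb : b ∈ univ.image (op a)) :
    ({c | op a c = b} : Finset S) = univ.image (op b) := by
  rw [mem_image_univ_iff_mem_range] at hb
  ext c
  simp only [mem_filter, mem_univ, true_and, mem_image_univ_iff_mem_range]
  constructor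
  · rintro rfl
    exact h.mem_range_op_op a c
  · exact h.op_eq_of_mem_range hb

theorem IsCentral.card_eq_sq (h : IsCentral op) (a : S) :
    Fintype.card S = #(univ.image (op a)) ^ 2 := by
  rw [← card_univ, card_eq_sum_card_image (op a) univ,
    sum_congr rfl fun b hb => by rw [h.filter_op_eq hb, h.card_image_eq b a], sum_const,
    smul_eq_mul, sq]

end CentralGroupoid

theorem central_groupoid_square_order {S : Type*} [Fintype S]
    (bu : S → S → S) (h : ∀ a b c : S, bu (bu a b) (bu b c) = b) :
    ∃ n : ℕ, Fintype.card S = n ^ 2 := by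
  classical
  rcases isEmpty_or_nonempty S with hS | ⟨⟨a⟩⟩
  · exact ⟨0, by simp⟩
  · exact ⟨_, CentralGroupoid.IsCentral.card_eq_sq h a⟩
end
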